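/- Let N ≥ 1, 1 ≤ p < ∞, let u ∈ L^p(ℝ^N) be nonnegative, let H ⊂ ℝ^N be a closed halfspace, and let ρ : ℝ^N → [0,∞) be a radial, radially nonincreasing integrable function. Then ∫_{ℝ^N} ∫_{ℝ^N} |u^H(x) − u^H(y)|^p ρ(x − y) dx dy ≤ ∫_{ℝ^N} ∫_{ℝ^N} |u(x) − u(y)|^p ρ(x − y) dx dy. -/

import Mathlib

open MeasureTheory Function
open scoped ENNReal

/-!
Let `σ` be the reflection across `∂H`, an affine isometry preserving Lebesgue measure. Summing
the integrand over the orbit `{x, σ x} × {y, σ y}` and using that `σ × σ`, `id × σ`, `σ × id`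
preserve the product measure, both double integrals become a quarter of the integral of the
orbit sums, so it suffices to compare orbit sums pointwise. These sums are invariant under `σ` in
each variable, so we may take `x, y ∈ H`. Then `‖x - y‖ ≤ ‖x - σ y‖`, hence `ρ(x - y) ≥ ρ(x - σ y)`,
while `u^H` sorts the pairs `(u x, u (σ x))` and `(u y, u (σ y))` so that the larger values meet
across the heavier weight; the comparison is then a rearrangement inequality for the convex
function `|·|^p`.
-/

/-- Reflection across the boundary hyperplane `{x : ⟪a,x⟫ = b}` of the closed
halfspace `H = {x : ⟪a,x⟫ ≤ b}` (for `‖a‖ = 1`). -/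
noncomputable def reflectH {N : ℕ} (a : EuclideanSpace ℝ (Fin N)) (b : ℝ)
    (x : EuclideanSpace ℝ (Fin N)) : EuclideanSpace ℝ (Fin N) :=
  x - (2 * ((inner ℝ a x : ℝ) - b)) • a

/-- Polarization (two-point rearrangement) of `u` with respect to the closed halfspace
`H = {x : ⟪a,x⟫ ≤ b}` (for `‖a‖ = 1`). -/
noncomputable def polarization {N : ℕ} (a : EuclideanSpace ℝ (Fin N)) (b : ℝ)
    (u : EuclideanSpace ℝ (Fin N) → ℝ) (x : EuclideanSpace ℝ (Fin N)) : ℝ :=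
  if (inner ℝ a x : ℝ) ≤ b then max (u x) (u (reflectH a b x))
  else min (u x) (u (reflectH a b x))

section Reflection

variable {N : ℕ} {a : EuclideanSpace ℝ (Fin N)} {b : ℝ}

lemma inner_reflectH (ha : ‖a‖ = 1) (x : EuclideanSpace ℝ (Fin N)) :
    inner ℝ a (reflectH a b x) = 2 * b - inner ℝ a x := by
  have haa : inner ℝ a a = (1 : ℝ) := by rw [real_inner_self_eq_norm_sq, ha, one_pow]
  simp only [reflectH, inner_sub_right, real_inner_smul_right, haa]
  ring

lemma reflectH_involutive (ha : ‖a‖ = 1) : Involutive (reflectH a b) := fun x => by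
  rw [reflectH, inner_reflectH ha, reflectH]
  module

lemma reflectH_eq_reflection_add (ha : ‖a‖ = 1) (x : EuclideanSpace ℝ (Fin N)) :
    reflectH a b x = (ℝ ∙ a)ᗮ.reflection x + (2 * b) • a := by
  rw [Submodule.reflection_apply, Submodule.starProjection_orthogonal_val,
    Submodule.starProjection_singleton, ha, reflectH]
  push_cast
  module

lemma norm_reflectH_sub_reflectH (ha : ‖a‖ = 1) (x y : EuclideanSpace ℝ (Fin N)) :
    ‖reflectH a b x - reflectH a b y‖ = ‖x - y‖ := by
  rw [reflectH_eq_reflection_add ha, reflectH_eq_reflection_add ha, add_sub_add_right_eq_sub,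
    ← map_sub, LinearIsometryEquiv.norm_map]

lemma measurePreserving_reflectH (ha : ‖a‖ = 1) :
    MeasurePreserving (reflectH a b) (volume : Measure (EuclideanSpace ℝ (Fin N))) volume := by
  have h := (measurePreserving_add_right volume ((2 * b) • a)).comp
    ((ℝ ∙ a)ᗮ.reflection.measurePreserving)
  rwa [show reflectH a b = _ from funext (reflectH_eq_reflection_add (b := b) ha)]

lemma norm_sub_le_norm_sub_reflectH (ha : ‖a‖ = 1) {x y : EuclideanSpace ℝ (Fin N)}
    (hx : inner ℝ a x ≤ b) (hy : inner ℝ a y ≤ b) : ‖x - y‖ ≤ ‖x - reflectH a b y‖ := by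
  have hsq : ‖x - reflectH a b y‖ ^ 2
      = ‖x - y‖ ^ 2 + 4 * (inner ℝ a x - b) * (inner ℝ a y - b) := by
    have hxy : x - reflectH a b y = (x - y) + (2 * (inner ℝ a y - b)) • a := by
      rw [reflectH]; abel
    rw [hxy, norm_add_sq_real, real_inner_smul_right, norm_smul, inner_sub_left,
      real_inner_comm x, real_inner_comm y, ha, Real.norm_eq_abs, mul_one, sq_abs]
    ring
  rw [← sq_le_sq₀ (norm_nonneg _) (norm_nonneg _), hsq]
  nlinarith

end Reflection

section Convexity

variable {φ : ℝ → ℝ}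

lemma convexOn_abs_rpow {p : ℝ} (hp : 1 ≤ p) : ConvexOn ℝ Set.univ fun x : ℝ => |x| ^ p := by
  refine ⟨convex_univ, fun x _ y _ s t hs ht hst => ?_⟩
  calc |s • x + t • y| ^ p ≤ (s * |x| + t * |y|) ^ p := by
        gcongr
        simpa [abs_mul, abs_of_nonneg hs, abs_of_nonneg ht] using abs_add_le (s * x) (t * y)
    _ ≤ s • |x| ^ p + t • |y| ^ p :=
        (convexOn_rpow hp).2 (abs_nonneg x) (abs_nonneg y) hs ht hst

lemma ConvexOn.map_add_map_le_of_mem_Icc (hφ : ConvexOn ℝ Set.univ φ) {x y₁ y₂ : ℝ}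
    (h₁ : y₂ ≤ x) (h₂ : x ≤ y₁) : φ x + φ (y₁ + y₂ - x) ≤ φ y₁ + φ y₂ := by
  rcases h₁.eq_or_lt with rfl | hlt
  · simp [add_comm]
  set t := (x - y₂) / (y₁ - y₂)
  have hd : 0 < y₁ - y₂ := by linarith
  have ht0 : 0 ≤ t := div_nonneg (by linarith) hd.le
  have ht1 : t ≤ 1 := (div_le_one hd).2 (by linarith)
  have hx : t * y₁ + (1 - t) * y₂ = x := by
    simp only [t]
    field_simp
    ring
  have h1 := hφ.2 (Set.mem_univ y₁) (Set.mem_univ y₂) ht0 (sub_nonneg.2 ht1) (by ring)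
  have h2 := hφ.2 (Set.mem_univ y₁) (Set.mem_univ y₂) (sub_nonneg.2 ht1) ht0 (by ring)
  simp only [smul_eq_mul] at h1 h2
  rw [hx] at h1
  rw [show (1 - t) * y₁ + t * y₂ = y₁ + y₂ - x by linarith] at h2
  linarith

lemma ConvexOn.map_sub_add_map_sub_le (hφ : ConvexOn ℝ Set.univ φ) {A B C D : ℝ}
    (hCA : C ≤ A) (hDB : D ≤ B) : φ (A - B) + φ (C - D) ≤ φ (A - D) + φ (C - B) := by
  have h := hφ.map_add_map_le_of_mem_Icc (x := A - B) (y₁ := A - D) (y₂ := C - B)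
    (by linarith) (by linarith)
  rwa [show A - D + (C - B) - (A - B) = C - D by ring] at h

lemma ConvexOn.two_point_rearrangement (hφ : ConvexOn ℝ Set.univ φ) (s t v w : ℝ) {r₁ r₂ : ℝ}
    (hr : r₂ ≤ r₁) :
    φ (max s t - max v w) * r₁ + φ (max s t - min v w) * r₂
        + φ (min s t - max v w) * r₂ + φ (min s t - min v w) * r₁
      ≤ φ (s - v) * r₁ + φ (s - w) * r₂ + φ (t - v) * r₂ + φ (t - w) * r₁ := by
  have hr' : 0 ≤ r₁ - r₂ := sub_nonneg.2 hr
  rcases le_total t s with hts | hst <;> rcases le_total w v with hwv | hvw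
  · rw [max_eq_left hts, min_eq_right hts, max_eq_left hwv, min_eq_right hwv]
  · rw [max_eq_left hts, min_eq_right hts, max_eq_right hvw, min_eq_left hvw]
    linarith [mul_le_mul_of_nonneg_left (hφ.map_sub_add_map_sub_le hts hvw) hr']
  · rw [max_eq_right hst, min_eq_left hst, max_eq_left hwv, min_eq_right hwv]
    linarith [mul_le_mul_of_nonneg_left (hφ.map_sub_add_map_sub_le hst hwv) hr']
  · rw [max_eq_right hst, min_eq_left hst, max_eq_right hvw, min_eq_left hvw]
    linarith

end Convexity

section Polarization

variable {N : ℕ} {a : EuclideanSpace ℝ (Fin N)} {b : ℝ} {u : EuclideanSpace ℝ (Fin N) → ℝ}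
  {x : EuclideanSpace ℝ (Fin N)}

lemma polarization_of_inner_le (hx : inner ℝ a x ≤ b) :
    polarization a b u x = max (u x) (u (reflectH a b x)) := if_pos hx

lemma polarization_reflectH_of_inner_le (ha : ‖a‖ = 1) (hx : inner ℝ a x ≤ b) :
    polarization a b u (reflectH a b x) = min (u x) (u (reflectH a b x)) := by
  rcases hx.eq_or_lt with hb | hlt
  · have hfix : reflectH a b x = x := by simp [reflectH, hb]
    rw [hfix, polarization_of_inner_le hx, hfix, max_self, min_self]
  · have hσx : ¬ inner ℝ a (reflectH a b x) ≤ b := by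
      rw [inner_reflectH ha]; linarith
    rw [polarization, if_neg hσx, reflectH_involutive ha, min_comm]

lemma aemeasurable_polarization (ha : ‖a‖ = 1) (hu : AEMeasurable u volume) :
    AEMeasurable (polarization a b u) volume := by
  have huσ : AEMeasurable (fun x => u (reflectH a b x)) volume :=
    hu.comp_quasiMeasurePreserving (measurePreserving_reflectH ha).quasiMeasurePreserving
  have hsort : Measurable fun q : ℝ × ℝ × ℝ =>
      if q.1 ≤ b then max q.2.1 q.2.2 else min q.2.1 q.2.2 :=
    Measurable.ite (measurableSet_le measurable_fst measurable_const) (by fun_prop) (by fun_prop)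
  exact hsort.comp_aemeasurable
    ((by fun_prop : Measurable fun x => inner ℝ a x).aemeasurable.prodMk (hu.prodMk huσ))

end Polarization

lemma MeasureTheory.MeasurePreserving.lintegral_comp_of_aemeasurable {α β : Type*}
    [MeasurableSpace α] [MeasurableSpace β] {μ : Measure α} {ν : Measure β} {T : α → β}
    (hT : MeasurePreserving T μ ν) {g : β → ℝ≥0∞} (hg : AEMeasurable g ν) :
    ∫⁻ z, g (T z) ∂μ = ∫⁻ z, g z ∂ν := by
  have h := lintegral_map' (hT.map_eq ▸ hg) hT.measurable.aemeasurable
  rwa [hT.map_eq, eq_comm] at h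

section OrbitSum

variable {α M : Type*} {σ : α → α}

variable (σ) in
def orbitSum [AddCommMonoid M] (g : α × α → M) (z : α × α) : M :=
  g z + g (z.1, σ z.2) + g (σ z.1, z.2) + g (σ z.1, σ z.2)

lemma orbitSum_map_left [AddCommMonoid M] (hσ : Involutive σ) (g : α × α → M) (x y : α) :
    orbitSum σ g (σ x, y) = orbitSum σ g (x, y) := by
  simp only [orbitSum, hσ x]
  abel

lemma orbitSum_map_right [AddCommMonoid M] (hσ : Involutive σ) (g : α × α → M) (x y : α) :
    orbitSum σ g (x, σ y) = orbitSum σ g (x, y) := by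
  simp only [orbitSum, hσ y]
  abel

lemma orbitSum_ofReal {g : α × α → ℝ} (hg : ∀ z, 0 ≤ g z) (z : α × α) :
    orbitSum σ (fun z => ENNReal.ofReal (g z)) z = ENNReal.ofReal (orbitSum σ g z) := by
  have h₀ := hg z
  have h₁ := hg (z.1, σ z.2)
  have h₂ := hg (σ z.1, z.2)
  have h₃ := hg (σ z.1, σ z.2)
  rw [orbitSum, orbitSum, ENNReal.ofReal_add (add_nonneg (add_nonneg h₀ h₁) h₂) h₃,
    ENNReal.ofReal_add (add_nonneg h₀ h₁) h₂, ENNReal.ofReal_add h₀ h₁]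

lemma lintegral_orbitSum [MeasurableSpace α] {μ : Measure α} [SFinite μ]
    (hσ : MeasurePreserving σ μ μ) {g : α × α → ℝ≥0∞} (hg : AEMeasurable g (μ.prod μ)) :
    ∫⁻ z, orbitSum σ g z ∂(μ.prod μ) = 4 * ∫⁻ z, g z ∂(μ.prod μ) := by
  have h₁ := (MeasurePreserving.id μ).prod hσ
  have h₂ := hσ.prod (MeasurePreserving.id μ)
  have h₃ := hσ.prod hσ
  have hg₁ : AEMeasurable (fun z : α × α => g (z.1, σ z.2)) (μ.prod μ) :=
    hg.comp_quasiMeasurePreserving h₁.quasiMeasurePreserving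
  have hg₂ : AEMeasurable (fun z : α × α => g (σ z.1, z.2)) (μ.prod μ) :=
    hg.comp_quasiMeasurePreserving h₂.quasiMeasurePreserving
  have hg₃ : AEMeasurable (fun z : α × α => g (σ z.1, σ z.2)) (μ.prod μ) :=
    hg.comp_quasiMeasurePreserving h₃.quasiMeasurePreserving
  have e₁ : ∫⁻ z, g (z.1, σ z.2) ∂(μ.prod μ) = ∫⁻ z, g z ∂(μ.prod μ) :=
    h₁.lintegral_comp_of_aemeasurable hg
  have e₂ : ∫⁻ z, g (σ z.1, z.2) ∂(μ.prod μ) = ∫⁻ z, g z ∂(μ.prod μ) :=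
    h₂.lintegral_comp_of_aemeasurable hg
  have e₃ : ∫⁻ z, g (σ z.1, σ z.2) ∂(μ.prod μ) = ∫⁻ z, g z ∂(μ.prod μ) :=
    h₃.lintegral_comp_of_aemeasurable hg
  simp only [orbitSum]
  rw [lintegral_add_right' _ hg₃, lintegral_add_right' _ hg₂, lintegral_add_right' _ hg₁,
    e₁, e₂, e₃]
  ring

end OrbitSum

lemma abs_sub_rpow_le {p : ℝ} (hp : 0 ≤ p) (x y : ℝ) :
    |x - y| ^ p ≤ 2 ^ p * (|x| ^ p + |y| ^ p) := by
  have hmax : |x - y| ≤ 2 * max |x| |y| := by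
    linarith [abs_sub x y, le_max_left |x| |y|, le_max_right |x| |y|]
  calc |x - y| ^ p ≤ (2 * max |x| |y|) ^ p := by gcongr
    _ = 2 ^ p * max |x| |y| ^ p := Real.mul_rpow zero_le_two (by positivity)
    _ ≤ 2 ^ p * (|x| ^ p + |y| ^ p) := by
        gcongr
        rcases max_choice |x| |y| with h | h <;> rw [h] <;>
          linarith [Real.rpow_nonneg (abs_nonneg x) p, Real.rpow_nonneg (abs_nonneg y) p]

section NonlocalIntegrand

variable {G : Type*} [AddCommGroup G] {p : ℝ} {r f : G → ℝ}

noncomputable def nonlocalIntegrand (p : ℝ) (r f : G → ℝ) (z : G × G) : ℝ :=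
  |f z.1 - f z.2| ^ p * r (z.1 - z.2)

lemma nonlocalIntegrand_nonneg (hr : ∀ z, 0 ≤ r z) (z : G × G) :
    0 ≤ nonlocalIntegrand p r f z :=
  mul_nonneg (Real.rpow_nonneg (abs_nonneg _) p) (hr _)

variable [MeasurableSpace G] [MeasurableAdd₂ G] [MeasurableNeg G] {μ : Measure G} [SFinite μ]
  [μ.IsAddRightInvariant]

lemma aestronglyMeasurable_nonlocalIntegrand (hf : AEMeasurable f μ) (hr : AEMeasurable r μ) :
    AEStronglyMeasurable (nonlocalIntegrand p r f) (μ.prod μ) := by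
  have h₁ : AEMeasurable (fun z : G × G => f z.1) (μ.prod μ) :=
    hf.comp_quasiMeasurePreserving Measure.quasiMeasurePreserving_fst
  have h₂ : AEMeasurable (fun z : G × G => f z.2) (μ.prod μ) :=
    hf.comp_quasiMeasurePreserving Measure.quasiMeasurePreserving_snd
  have h₃ : AEMeasurable (fun z : G × G => r (z.1 - z.2)) (μ.prod μ) :=
    hr.comp_quasiMeasurePreserving (quasiMeasurePreserving_sub_of_right_invariant μ μ)
  exact (((h₁.sub h₂).abs.pow_const p).mul h₃).aestronglyMeasurable

lemma integrable_nonlocalIntegrand [μ.IsNegInvariant] (hp : 0 < p)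
    (hf : MemLp f (ENNReal.ofReal p) μ) (hr : Integrable r μ) :
    Integrable (nonlocalIntegrand p r f) (μ.prod μ) := by
  have hfp : Integrable (fun x => |f x| ^ p) μ := by
    simpa [ENNReal.toReal_ofReal hp.le] using
      hf.integrable_norm_rpow (by simpa using hp) ENNReal.ofReal_ne_top
  have hsnd : Integrable (fun z : G × G => |f z.2| ^ p * |r (z.1 - z.2)|) (μ.prod μ) := by
    simpa using hfp.convolution_integrand (ContinuousLinearMap.mul ℝ ℝ) hr.abs
  have hfst : Integrable (fun z : G × G => |f z.1| ^ p * |r (z.1 - z.2)|) (μ.prod μ) := by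
    have h := (hfp.convolution_integrand (ContinuousLinearMap.mul ℝ ℝ) hr.abs.comp_neg).swap
    simpa [Function.comp_def] using h
  refine ((hfst.add hsnd).const_mul (2 ^ p)).mono'
    (aestronglyMeasurable_nonlocalIntegrand hf.aestronglyMeasurable.aemeasurable
      hr.aestronglyMeasurable.aemeasurable) (ae_of_all _ fun z => ?_)
  rw [nonlocalIntegrand, norm_mul, Real.norm_of_nonneg (by positivity), Real.norm_eq_abs,
    Pi.add_apply, ← add_mul, ← mul_assoc]
  gcongr
  exact abs_sub_rpow_le hp.le _ _

end NonlocalIntegrand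

section PolarizationInequality

variable {N : ℕ} {a : EuclideanSpace ℝ (Fin N)} {b p : ℝ} {u r : EuclideanSpace ℝ (Fin N) → ℝ}
  {W : ℝ → ℝ}

lemma orbitSum_nonlocalIntegrand_polarization_le (hp : 1 ≤ p) (ha : ‖a‖ = 1)
    (hW : AntitoneOn W (Set.Ici 0)) (hrW : ∀ z, r z = W ‖z‖)
    (z : EuclideanSpace ℝ (Fin N) × EuclideanSpace ℝ (Fin N)) :
    orbitSum (reflectH a b) (nonlocalIntegrand p r (polarization a b u)) z
      ≤ orbitSum (reflectH a b) (nonlocalIntegrand p r u) z := by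
  have hσ := reflectH_involutive (b := b) ha
  obtain ⟨x, y⟩ := z
  wlog hx : inner ℝ a x ≤ b generalizing x
  · have h := this (reflectH a b x) (by rw [inner_reflectH ha]; linarith)
    rwa [orbitSum_map_left hσ, orbitSum_map_left hσ] at h
  wlog hy : inner ℝ a y ≤ b generalizing y
  · have h := this (reflectH a b y) (by rw [inner_reflectH ha]; linarith)
    rwa [orbitSum_map_right hσ, orbitSum_map_right hσ] at h
  have hr_reflectH : ∀ x' y', r (reflectH a b x' - reflectH a b y') = r (x' - y') := by
    intro x' y'
    rw [hrW, hrW, norm_reflectH_sub_reflectH ha]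
  have hr_cross : r (reflectH a b x - y) = r (x - reflectH a b y) := by
    rw [← hr_reflectH, hσ]
  have hr_le : r (x - reflectH a b y) ≤ r (x - y) := by
    rw [hrW, hrW]
    exact hW (norm_nonneg _) (norm_nonneg _) (norm_sub_le_norm_sub_reflectH ha hx hy)
  simp only [orbitSum, nonlocalIntegrand, polarization_of_inner_le hx, polarization_of_inner_le hy,
    polarization_reflectH_of_inner_le ha hx, polarization_reflectH_of_inner_le ha hy,
    hr_reflectH, hr_cross]
  exact (convexOn_abs_rpow hp).two_point_rearrangement _ _ _ _ hr_le

lemma lintegral_nonlocalIntegrand_polarization_le (hp : 1 ≤ p) (ha : ‖a‖ = 1)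
    (hu : AEMeasurable u volume) (hr : AEMeasurable r volume) (hr0 : ∀ z, 0 ≤ r z)
    (hW : AntitoneOn W (Set.Ici 0)) (hrW : ∀ z, r z = W ‖z‖) :
    ∫⁻ z, ENNReal.ofReal (nonlocalIntegrand p r (polarization a b u) z) ∂(volume.prod volume)
      ≤ ∫⁻ z, ENNReal.ofReal (nonlocalIntegrand p r u z) ∂(volume.prod volume) := by
  have h_orbit : ∀ f : EuclideanSpace ℝ (Fin N) → ℝ, AEMeasurable f volume →
      4 * ∫⁻ z, ENNReal.ofReal (nonlocalIntegrand p r f z) ∂(volume.prod volume)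
        = ∫⁻ z, ENNReal.ofReal (orbitSum (reflectH a b) (nonlocalIntegrand p r f) z)
            ∂(volume.prod volume) := by
    intro f hf
    rw [← lintegral_orbitSum (measurePreserving_reflectH (b := b) ha)
      (aestronglyMeasurable_nonlocalIntegrand hf hr).aemeasurable.ennreal_ofReal]
    simp only [orbitSum_ofReal (nonlocalIntegrand_nonneg hr0)]
  rw [← ENNReal.mul_le_mul_iff_right (a := 4) (by norm_num) (by norm_num), h_orbit _ hu,
    h_orbit _ (aemeasurable_polarization ha hu)]
  exact lintegral_mono fun z =>
    ENNReal.ofReal_le_ofReal (orbitSum_nonlocalIntegrand_polarization_le hp ha hW hrW z)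

end PolarizationInequality

theorem statement11_general {N : ℕ} (p : ℝ) (hp : 1 ≤ p)
    (u : EuclideanSpace ℝ (Fin N) → ℝ)
    (hu : MemLp u (ENNReal.ofReal p) volume)
    (a : EuclideanSpace ℝ (Fin N)) (b : ℝ) (ha : ‖a‖ = 1)
    (r : EuclideanSpace ℝ (Fin N) → ℝ) (hr : Integrable r volume) (hr0 : ∀ x, 0 ≤ r x)
    (W : ℝ → ℝ) (hW : AntitoneOn W (Set.Ici 0)) (hrW : ∀ x, r x = W ‖x‖) :
    ∫ x, ∫ y, |polarization a b u x - polarization a b u y| ^ p * r (x - y) ≤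
      ∫ x, ∫ y, |u x - u y| ^ p * r (x - y) := by
  have hum : AEMeasurable u volume := hu.aestronglyMeasurable.aemeasurable
  have hle := lintegral_nonlocalIntegrand_polarization_le (b := b) hp ha hum hr.aemeasurable hr0
    hW hrW
  have hF_nonneg : ∀ f, 0 ≤ᵐ[volume.prod volume] nonlocalIntegrand p r f :=
    fun f => ae_of_all _ (nonlocalIntegrand_nonneg hr0)
  have hFu : Integrable (nonlocalIntegrand p r u) (volume.prod volume) :=
    integrable_nonlocalIntegrand (by linarith) hu hr
  have hFu_fin := (hasFiniteIntegral_iff_ofReal (hF_nonneg u)).1 hFu.2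
  have hFP : Integrable (nonlocalIntegrand p r (polarization a b u)) (volume.prod volume) :=
    ⟨aestronglyMeasurable_nonlocalIntegrand (aemeasurable_polarization ha hum) hr.aemeasurable,
      (hasFiniteIntegral_iff_ofReal (hF_nonneg _)).2 (hle.trans_lt hFu_fin)⟩
  have h := ENNReal.toReal_mono hFu_fin.ne hle
  rw [← integral_eq_lintegral_of_nonneg_ae (hF_nonneg _) hFP.1,
    ← integral_eq_lintegral_of_nonneg_ae (hF_nonneg _) hFu.1,
    integral_prod _ hFP, integral_prod _ hFu] at h
  exact h

/-- For nonnegative `u ∈ L^p(ℝ^N)`, any closed halfspace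
`H = {x : ⟪a,x⟫ ≤ b}`, and any radial, radially nonincreasing, nonnegative integrable `r`,
one has `∬ |u^H(x) − u^H(y)|^p r(x−y) dx dy ≤ ∬ |u(x) − u(y)|^p r(x−y) dx dy`. -/
theorem statement11 {N : ℕ} (hN : 1 ≤ N) (p : ℝ) (hp : 1 ≤ p)
    (u : EuclideanSpace ℝ (Fin N) → ℝ)
    (hu : MemLp u (ENNReal.ofReal p) volume) (hu0 : ∀ x, 0 ≤ u x)
    (a : EuclideanSpace ℝ (Fin N)) (b : ℝ) (ha : ‖a‖ = 1)
    (r : EuclideanSpace ℝ (Fin N) → ℝ) (hr : Integrable r volume) (hr0 : ∀ x, 0 ≤ r x)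
    (W : ℝ → ℝ) (hW : AntitoneOn W (Set.Ici 0)) (hrW : ∀ x, r x = W ‖x‖) :
    ∫ x, ∫ y, |polarization a b u x - polarization a b u y| ^ p * r (x - y) ≤
      ∫ x, ∫ y, |u x - u y| ^ p * r (x - y) :=
  statement11_general p hp u hu a b ha r hr hr0 W hW hrW
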